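/- Fix an integer k ≥ 2 and real numbers 0 = a_0 < a_1 < ⋯ < a_{k−1}. For PMFs A, B on a countable type Ω, define S_j := {ω : a_{j−1}·B(ω) < A(ω) ≤ a_j·B(ω)} for j ∈ {1, …, k−1}, and S_k := {ω : A(ω) > a_{k−1}·B(ω)}. Then for every i ∈ {0, 1, …, k−1}: D_{a_i}(A‖B) ≤ ∑_{j=1}^{k−1} max(1 − a_i/a_j, 0)·(∑_{ω ∈ S_j} A(ω)) + ∑_{ω ∈ S_k} A(ω). That is, at every grid point, the hockey-stick divergence of (A, B) (and hence its connect-the-dots pessimistic estimate) is no larger than the hockey-stick divergence of the pessimistic Privacy Buckets estimate. -/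

import Mathlib

/-!
Bucket the outcomes by their likelihood ratio `A ω / B ω`. On the bucket `(a (j-1), a j]`
we have `B ω ≥ A ω / a j`, so the hockey-stick summand `max (A ω - α B ω) 0` is at most
`max (1 - α / a j) 0 * A ω`; above `a (k-1)` it is at most `A ω`. Summing these pointwise
bounds over `ω` gives the Privacy Buckets estimate.
-/

/-- The α-hockey-stick divergence between two PMFs. -/
noncomputable def hsDiv {Ω : Type*} (α : ℝ) (P Q : PMF Ω) : ℝ :=
  ∑' ω, max ((P ω).toReal - α * (Q ω).toReal) 0

open Finset

theorem Nat.exists_lt_not_and_succ_of_not_zero {p : ℕ → Prop} {n : ℕ} (h0 : ¬p 0)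
    (hn : p n) : ∃ j < n, ¬p j ∧ p (j + 1) := by
  induction n with
  | zero => exact absurd hn h0
  | succ n ih =>
    by_cases hp : p n
    · obtain ⟨j, hjn, hj⟩ := ih hp
      exact ⟨j, hjn.trans n.lt_succ_self, hj⟩
    · exact ⟨n, n.lt_succ_self, hp, hn⟩

theorem max_sub_mul_le_max_one_sub_div_mul {x y α t : ℝ} (hx : 0 ≤ x) (hy : 0 ≤ y)
    (hα : 0 ≤ α) (hxt : x ≤ t * y) : max (x - α * y) 0 ≤ max (1 - α / t) 0 * x := by
  have hαx : α / t * x ≤ α * y := by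
    rcases le_or_gt t 0 with ht | ht
    · exact (mul_nonpos_of_nonpos_of_nonneg (div_nonpos_of_nonneg_of_nonpos hα ht) hx).trans
        (mul_nonneg hα hy)
    · rw [div_mul_eq_mul_div, div_le_iff₀ ht, mul_assoc, mul_comm y]
      exact mul_le_mul_of_nonneg_left hxt hα
  refine max_le ?_ (mul_nonneg (le_max_right _ _) hx)
  calc x - α * y ≤ (1 - α / t) * x := by linarith
    _ ≤ max (1 - α / t) 0 * x := mul_le_mul_of_nonneg_right (le_max_left _ _) hx

section RatioBuckets

variable {Ω : Type*} (a : ℕ → ℝ) (f g : Ω → ℝ)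

/- The likelihood ratio `f ω / g ω` is compared by cross-multiplying, so an outcome with
`g ω = 0 < f ω` has ratio `+∞` and falls into `ratioTail`. -/
def ratioBucket (j : ℕ) : Set Ω := {ω | a (j - 1) * g ω < f ω ∧ f ω ≤ a j * g ω}

def ratioTail (n : ℕ) : Set Ω := {ω | a n * g ω < f ω}

noncomputable def bucketBound (n : ℕ) (α : ℝ) (ω : Ω) : ℝ :=
  ∑ j ∈ Icc 1 n, max (1 - α / a j) 0 * (ratioBucket a f g j).indicator f ω +
    (ratioTail a f g n).indicator f ω

variable {a f g}

theorem bucketBound_nonneg (hf : 0 ≤ f) (n : ℕ) (α : ℝ) (ω : Ω) :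
    0 ≤ bucketBound a f g n α ω :=
  add_nonneg (sum_nonneg fun _ _ => mul_nonneg (le_max_right _ _) (Set.indicator_nonneg
    (fun ω _ => hf ω) ω)) (Set.indicator_nonneg (fun ω _ => hf ω) ω)

theorem max_sub_mul_le_bucketBound (ha0 : a 0 = 0) (hf : 0 ≤ f) (hg : 0 ≤ g) (n : ℕ)
    {α : ℝ} (hα : 0 ≤ α) (ω : Ω) :
    max (f ω - α * g ω) 0 ≤ bucketBound a f g n α ω := by
  have hαg : 0 ≤ α * g ω := mul_nonneg hα (hg ω)
  have hterm_nonneg : ∀ j ∈ Icc 1 n,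
      0 ≤ max (1 - α / a j) 0 * (ratioBucket a f g j).indicator f ω :=
    fun _ _ => mul_nonneg (le_max_right _ _) (Set.indicator_nonneg (fun ω _ => hf ω) ω)
  by_cases htail : ω ∈ ratioTail a f g n
  · calc max (f ω - α * g ω) 0 ≤ f ω := max_le (by linarith) (hf ω)
      _ = (ratioTail a f g n).indicator f ω := (Set.indicator_of_mem htail f).symm
      _ ≤ bucketBound a f g n α ω := le_add_of_nonneg_left (sum_nonneg hterm_nonneg)
  by_cases hzero : f ω ≤ a 0 * g ω
  · rw [ha0, zero_mul] at hzero
    exact (max_le (by linarith) le_rfl).trans (bucketBound_nonneg hf n α ω)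
  obtain ⟨j, hjn, hbelow, habove⟩ := Nat.exists_lt_not_and_succ_of_not_zero
    (p := fun j => f ω ≤ a j * g ω) hzero (not_lt.mp htail)
  have hmem : ω ∈ ratioBucket a f g (j + 1) := ⟨not_le.mp hbelow, habove⟩
  calc max (f ω - α * g ω) 0 ≤ max (1 - α / a (j + 1)) 0 * f ω :=
        max_sub_mul_le_max_one_sub_div_mul (hf ω) (hg ω) hα habove
    _ = max (1 - α / a (j + 1)) 0 * (ratioBucket a f g (j + 1)).indicator f ω := by
        rw [Set.indicator_of_mem hmem]
    _ ≤ ∑ j ∈ Icc 1 n, max (1 - α / a j) 0 * (ratioBucket a f g j).indicator f ω :=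
        single_le_sum hterm_nonneg (mem_Icc.mpr ⟨j.succ_pos, hjn⟩)
    _ ≤ bucketBound a f g n α ω := le_add_of_nonneg_right (Set.indicator_nonneg
        (fun ω _ => hf ω) ω)

theorem summable_bucketBound_term (hf : Summable f) (α : ℝ) (j : ℕ) :
    Summable fun ω => max (1 - α / a j) 0 * (ratioBucket a f g j).indicator f ω :=
  (hf.indicator _).mul_left _

theorem summable_bucketBound (hf : Summable f) (n : ℕ) (α : ℝ) :
    Summable (bucketBound a f g n α) :=
  (summable_sum fun j _ => summable_bucketBound_term hf α j).add (hf.indicator _)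

theorem tsum_bucketBound (hf : Summable f) (n : ℕ) (α : ℝ) :
    ∑' ω, bucketBound a f g n α ω =
      ∑ j ∈ Icc 1 n, max (1 - α / a j) 0 * ∑' ω : ratioBucket a f g j, f ω +
        ∑' ω : ratioTail a f g n, f ω := by
  have hterm : ∀ j ∈ Icc 1 n, _ := fun j _ =>
    summable_bucketBound_term (a := a) (g := g) hf α j
  unfold bucketBound
  rw [Summable.tsum_add (summable_sum hterm) (hf.indicator _),
    Summable.tsum_finsetSum hterm, _root_.tsum_subtype]
  simp_rw [tsum_mul_left, _root_.tsum_subtype]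

end RatioBuckets

theorem PMF.summable_toReal {Ω : Type*} (A : PMF Ω) : Summable fun ω => (A ω).toReal :=
  ENNReal.summable_toReal (A.tsum_coe ▸ ENNReal.one_ne_top)

theorem connect_the_dots_le_privacy_buckets_general {Ω : Type*} {k : ℕ}
    (a : ℕ → ℝ) (ha0 : a 0 = 0) (hamono : ∀ i, i < k - 1 → a i < a (i + 1))
    (A B : PMF Ω) (i : ℕ) (hi : i ≤ k - 1) :
    hsDiv (a i) A B ≤
      (∑ j ∈ Finset.Icc 1 (k - 1),
        max (1 - a i / a j) 0 *
          ∑' ω : {ω : Ω // a (j - 1) * (B ω).toReal < (A ω).toReal ∧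
                    (A ω).toReal ≤ a j * (B ω).toReal},
            (A ω.1).toReal) +
      ∑' ω : {ω : Ω // a (k - 1) * (B ω).toReal < (A ω).toReal}, (A ω.1).toReal := by
  have hai : 0 ≤ a i := ha0 ▸ (strictMonoOn_Iic_of_lt_succ hamono).monotoneOn
    (Set.mem_Iic.mpr (Nat.zero_le _)) (Set.mem_Iic.mpr hi) (Nat.zero_le i)
  have hA : 0 ≤ fun ω => (A ω).toReal := fun _ => ENNReal.toReal_nonneg
  have hB : 0 ≤ fun ω => (B ω).toReal := fun _ => ENNReal.toReal_nonneg
  have hbound := max_sub_mul_le_bucketBound ha0 hA hB (k - 1) hai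
  have hsummable := summable_bucketBound (a := a) (g := fun ω => (B ω).toReal)
    A.summable_toReal (k - 1) (a i)
  calc hsDiv (a i) A B ≤ ∑' ω, bucketBound a _ _ (k - 1) (a i) ω :=
        Summable.tsum_le_tsum hbound
          (Summable.of_nonneg_of_le (fun _ => le_max_right _ _) hbound hsummable) hsummable
    _ = _ := tsum_bucketBound A.summable_toReal _ _

/-- At every grid point `a i`, the hockey-stick divergence of `(A, B)` is no larger
than the hockey-stick divergence of the pessimistic Privacy Buckets estimate, which
moves the mass of each bucket `(a (j-1), a j]` of likelihood ratios up to the bucket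
endpoint `a j` (and all ratios above `a (k-1)` up to `+∞`). -/
theorem connect_the_dots_le_privacy_buckets {Ω : Type*} [Countable Ω] {k : ℕ}
    (hk : 2 ≤ k)
    (a : ℕ → ℝ) (ha0 : a 0 = 0) (hamono : ∀ i, i < k - 1 → a i < a (i + 1))
    (A B : PMF Ω) (i : ℕ) (hi : i ≤ k - 1) :
    hsDiv (a i) A B ≤
      (∑ j ∈ Finset.Icc 1 (k - 1),
        max (1 - a i / a j) 0 *
          ∑' ω : {ω : Ω // a (j - 1) * (B ω).toReal < (A ω).toReal ∧
                    (A ω).toReal ≤ a j * (B ω).toReal},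
            (A ω.1).toReal) +
      ∑' ω : {ω : Ω // a (k - 1) * (B ω).toReal < (A ω).toReal}, (A ω.1).toReal :=
  connect_the_dots_le_privacy_buckets_general a ha0 hamono A B i hi
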